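/- Let v, w ∈ ℂ⁶ be nonzero vectors such that w is not a scalar multiple of v and w is not a scalar multiple of ι(v). Then there exists a homogeneous polynomial f ∈ ℂ[X₀,…,X₅] of degree 2 of the form f = c·X₀² + q, with c ∈ ℂ and q a homogeneous quadratic in the variables X₁,…,X₅ only, such that f(v) = 0 and f(w) ≠ 0. -/

import Mathlib

open MvPolynomial

/-- The linear involution ι of ℂ⁶ sending (x₀,x₁,…,x₅) to (-x₀,x₁,…,x₅). -/
def iotaInv (x : Fin 6 → ℂ) : Fin 6 → ℂ := fun i => if i = 0 then -x 0 else x i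

/-!
Write `v = (v₀, v')` with `v' ∈ ℂ⁵` and look for `f = c X₀² + p(X')`. If `w' ∉ ℂ v'`, a linear
form `ℓ` with `ℓ(v') = 0 ≠ ℓ(w')` gives `f = ℓ(X')²`. Otherwise `w' = t v'`, and the hypotheses
say that `w₀ ≠ ± t v₀`, i.e. `w₀² ≠ t² v₀²`. If `v' ≠ 0`, choose `ℓ(v') = 1` and take
`f = v₀² ℓ(X')² - X₀²`, so that `f(w) = t² v₀² - w₀²`; if `v' = 0`, then `v₀ = 0` (otherwise `w`
would be a multiple of `v`) and `f = X₀²` works.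
-/

namespace MvPolynomial

variable {R σ τ K : Type*}

theorem degreeOf_rename_eq_zero_of_notMem_range [CommSemiring R] (p : MvPolynomial σ R)
    {f : σ → τ} {i : τ} (hi : i ∉ Set.range f) : degreeOf i (rename f p) = 0 := by
  classical
  by_contra h
  obtain ⟨j, -, rfl⟩ :=
    Finset.mem_image.mp (vars_rename f p (mem_vars_iff_degreeOf_ne_zero.mpr h))
  exact hi ⟨j, rfl⟩

variable [Field K] [Fintype σ]

theorem exists_isHomogeneous_two_eval_eq_sq (φ : Module.Dual K (σ → K)) :
    ∃ p : MvPolynomial σ K, p.IsHomogeneous 2 ∧ ∀ x, eval x p = φ x ^ 2 := by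
  classical
  let ℓ : MvPolynomial σ K := ∑ i, C (φ (Pi.single i 1)) * X i
  have hℓ : ℓ.IsHomogeneous 1 :=
    IsHomogeneous.sum _ _ _ fun i _ => by
      simpa using (isHomogeneous_C σ _).mul (isHomogeneous_X K i)
  refine ⟨ℓ ^ 2, by simpa using hℓ.pow 2, fun x => ?_⟩
  have : eval x ℓ = φ x := by
    simp only [ℓ, map_sum, map_mul, eval_C, eval_X, φ.pi_apply_eq_sum_univ x, smul_eq_mul]
    exact Finset.sum_congr rfl fun i _ => by
      rw [mul_comm]; congr; ext j; simp [Pi.single_apply, eq_comm]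
  rw [eval_pow, this]

theorem exists_sq_add_isHomogeneous_two_separating {a b : K} {x y : σ → K}
    (h : ∀ t : K, y = t • x → b ^ 2 ≠ t ^ 2 * a ^ 2) :
    ∃ (c : K) (p : MvPolynomial σ K), p.IsHomogeneous 2 ∧
      c * a ^ 2 + eval x p = 0 ∧ c * b ^ 2 + eval y p ≠ 0 := by
  by_cases hy : y ∈ K ∙ x
  · obtain ⟨t, rfl⟩ := Submodule.mem_span_singleton.mp hy
    by_cases hx : x = 0
    · have ha : a = 0 := by
        by_contra ha
        exact h (b / a) (by simp [hx]) (by field_simp)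
      refine ⟨1, 0, isHomogeneous_zero _ _ _, by simp [ha], ?_⟩
      simpa [ha] using h t rfl
    · obtain ⟨φ, hφ⟩ := Module.Projective.exists_dual_eq_one K hx
      obtain ⟨p, hp, hpeval⟩ := exists_isHomogeneous_two_eval_eq_sq (a • φ)
      refine ⟨-1, p, hp, by simp [hpeval, hφ], ?_⟩
      have := h t rfl
      simp only [hpeval, LinearMap.smul_apply, map_smul, hφ, smul_eq_mul]
      contrapose! this
      linear_combination -this
  · obtain ⟨φ, hφy, hφx⟩ := Submodule.exists_dual_map_eq_bot_of_notMem hy inferInstance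
    obtain ⟨p, hp, hpeval⟩ := exists_isHomogeneous_two_eval_eq_sq φ
    have : φ x = 0 := by
      simpa [hφx] using Submodule.mem_map_of_mem (f := φ) (Submodule.mem_span_singleton_self x)
    exact ⟨0, p, hp, by simp [hpeval, this], by simpa [hpeval] using hφy⟩

end MvPolynomial

theorem Fin.eq_smul_of_zero_of_tail {M : Type*} {n : ℕ} [Mul M] {x y : Fin (n + 1) → M} {t : M}
    (h0 : x 0 = t * y 0) (htail : Fin.tail x = t • Fin.tail y) : x = t • y := by
  ext i
  exact i.cases h0 fun j => congrFun htail j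

theorem separating_invariant_quadric_general (v w : Fin 6 → ℂ)
    (hwv : ∀ c : ℂ, w ≠ c • v) (hwiv : ∀ c : ℂ, w ≠ c • iotaInv v) :
    ∃ f : MvPolynomial (Fin 6) ℂ,
      (∃ (c : ℂ) (q : MvPolynomial (Fin 6) ℂ),
        q.IsHomogeneous 2 ∧ degreeOf 0 q = 0 ∧ f = C c * X 0 ^ 2 + q) ∧
      eval v f = 0 ∧ eval w f ≠ 0 := by
  obtain ⟨c, p, hp, hpv, hpw⟩ := exists_sq_add_isHomogeneous_two_separating
    (a := v 0) (b := w 0) (x := Fin.tail v) (y := Fin.tail w) fun t htail hsq => by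
      have htail_iota : Fin.tail w = t • Fin.tail (iotaInv v) :=
        htail.trans (by ext j; simp [Fin.tail, iotaInv])
      rcases sq_eq_sq_iff_eq_or_eq_neg.mp (hsq.trans (mul_pow t (v 0) 2).symm) with h0 | h0
      · exact hwv t (Fin.eq_smul_of_zero_of_tail h0 htail)
      · exact hwiv t (Fin.eq_smul_of_zero_of_tail (by simp [iotaInv, h0]) htail_iota)
  refine ⟨C c * X 0 ^ 2 + rename Fin.succ p,
    ⟨c, _, hp.rename_isHomogeneous, degreeOf_rename_eq_zero_of_notMem_range p (by simp), rfl⟩,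
    ?_, ?_⟩ <;> simpa [eval_rename]

/-- If v, w ∈ ℂ⁶ are nonzero, w is not a scalar multiple of v and not a scalar multiple
of ι(v), then there is an invariant quadric f = c·X₀² + q(X₁,…,X₅) with f(v) = 0 and
f(w) ≠ 0. -/
theorem separating_invariant_quadric (v w : Fin 6 → ℂ) (hv : v ≠ 0) (hw : w ≠ 0)
    (hwv : ∀ c : ℂ, w ≠ c • v) (hwiv : ∀ c : ℂ, w ≠ c • iotaInv v) :
    ∃ f : MvPolynomial (Fin 6) ℂ,
      (∃ (c : ℂ) (q : MvPolynomial (Fin 6) ℂ),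
        q.IsHomogeneous 2 ∧ degreeOf 0 q = 0 ∧ f = C c * X 0 ^ 2 + q) ∧
      eval v f = 0 ∧ eval w f ≠ 0 :=
  separating_invariant_quadric_general v w hwv hwiv
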